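/- arXiv:1801.07990 — 2 statements merged into one kernel-verified Lean document; each statement's English description precedes it below -/
import Mathlib

section
/- The stabilization maps commute with the Hochschild differential: for each p ≥ 0, the embedding θ_p : C^*(A, Ω_nc^p(A)) → C^*(A, Ω_nc^{p+1}(A)) sending f to f ⊗ id_{s\bar{A}} satisfies θ_p ∘ δ = δ ∘ θ_p. -/
open TensorProduct PiTensorProduct

namespace TateHochschild

noncomputable section

variable (k A : Type) [Field k] [Ring A] [Algebra k A]

abbrev Abar : Type := A ⧸ (Submodule.span k ({(1 : A)} : Set A))
def pr : A →ₗ[k] Abar k A := (Submodule.span k ({(1 : A)} : Set A)).mkQ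
abbrev T (n : ℕ) : Type := ⨂[k] (_ : Fin n), Abar k A
abbrev Omega (n : ℕ) : Type := A ⊗[k] T k A n
def tp (n : ℕ) (v : ℕ → A) : T k A n := tprod k fun i : Fin n => pr k A (v i)
def omk (n : ℕ) (a0 : A) (v : ℕ → A) : Omega k A n := a0 ⊗ₜ tp k A n v

variable {A} in
def shiftT (v : ℕ → A) : ℕ → A := fun j => v (j + 1)
variable {A} in
def mulAt (v : ℕ → A) (i : ℕ) : ℕ → A :=
  fun j => if j < i then v j else if j = i then v i * v (i + 1) else v (j + 1)
variable {A} in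
def setAt (v : ℕ → A) (n : ℕ) (a : A) : ℕ → A := fun j => if j = n then a else v j
variable {A} in
/-- `catAt a v x w` is the tuple `v 0, …, v (a-1), x, w 0, w 1, …`. -/
def catAt (a : ℕ) (v : ℕ → A) (x : A) (w : ℕ → A) : ℕ → A :=
  fun j => if j < a then v j else if j = a then x else w (j - a - 1)

def sg (z : ℤ) : ℤ := if Even z then 1 else -1

def rGen (n : ℕ) (a0 : A) (v : ℕ → A) (a' : A) : Omega k A n :=
  sg (n : ℤ) • omk k A n (a0 * setAt v n a' 0) (shiftT (setAt v n a'))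
    + ∑ i ∈ Finset.range n, sg ((n : ℤ) + i + 1) • omk k A n a0 (mulAt (setAt v n a') i)

def IsRAct (n : ℕ) (act : Omega k A n →ₗ[k] A →ₗ[k] Omega k A n) : Prop :=
  ∀ (a0 : A) (v : ℕ → A) (a' : A), act (omk k A n a0 v) a' = rGen k A n a0 v a'

def lmul (n : ℕ) (a : A) : Omega k A n →ₗ[k] Omega k A n :=
  LinearMap.rTensor (T k A n) (LinearMap.mulLeft k a)

abbrev Bar (n : ℕ) : Type := A ⊗[k] (T k A n ⊗[k] A)
def bmk (n : ℕ) (a0 : A) (v : ℕ → A) (a' : A) : Bar k A n := a0 ⊗ₜ (tp k A n v ⊗ₜ a')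

def dGen (p : ℕ) (a0 : A) (v : ℕ → A) (a' : A) : Bar k A p :=
  bmk k A p (a0 * v 0) (shiftT v) a'
    + ∑ i ∈ Finset.range p, sg ((i : ℤ) + 1) • bmk k A p a0 (mulAt v i) a'
    + sg ((p : ℤ) + 1) • bmk k A p a0 v (v p * a')

def IsBarDiff (p : ℕ) (D : Bar k A (p + 1) →ₗ[k] Bar k A p) : Prop :=
  ∀ (a0 : A) (v : ℕ → A) (a' : A), D (bmk k A (p + 1) a0 v a') = dGen k A p a0 v a'

def castT {a b : ℕ} (h : a = b) : T k A a ≃ₗ[k] T k A b :=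
  PiTensorProduct.reindex k (fun _ => Abar k A) (finCongr h)
def castO {a b : ℕ} (h : a = b) : Omega k A a ≃ₗ[k] Omega k A b :=
  TensorProduct.congr (LinearEquiv.refl k A) (castT k A h)
def splitT (a b : ℕ) : T k A (a + b) ≃ₗ[k] T k A a ⊗[k] T k A b :=
  (PiTensorProduct.reindex k (fun _ => Abar k A) finSumFinEquiv.symm) ≪≫ₗ
    (PiTensorProduct.tmulEquiv k (Abar k A)).symm
def appOut (p q : ℕ) : Omega k A p ⊗[k] T k A q ≃ₗ[k] Omega k A (p + q) :=
  (TensorProduct.assoc k A (T k A p) (T k A q)) ≪≫ₗ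
    TensorProduct.congr (LinearEquiv.refl k A) (splitT k A p q).symm

abbrev Cochain (n p : ℕ) : Type := T k A n →ₗ[k] Omega k A p

def IsDelta (P N : ℕ) (act : Omega k A P →ₗ[k] A →ₗ[k] Omega k A P)
    (F : Cochain k A N P) (D : Cochain k A (N + 1) P) : Prop :=
  ∀ v : ℕ → A,
    D (tp k A (N + 1) v) =
      sg ((N : ℤ) + P + 1) •
        (lmul k A P (v 0) (F (tp k A N (shiftT v)))
          + ∑ i ∈ Finset.range N, sg ((i : ℤ) + 1) • F (tp k A N (mulAt v i))
          + sg ((N : ℤ) + 1) • act (F (tp k A N v)) (v N))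

def thetaM (P N : ℕ) (F : Cochain k A N P) : Cochain k A (N + 1) (P + 1) :=
  (appOut k A P 1).toLinearMap ∘ₗ LinearMap.rTensor (T k A 1) F ∘ₗ (splitT k A N 1).toLinearMap

/-- The one-bar appending map `Ω^p → A → Ω^{p+1}`, `(x, a) ↦ x ⊗ s\bar a`,
characterized on generators. -/
def IsApp (p : ℕ) (app : Omega k A p →ₗ[k] A →ₗ[k] Omega k A (p + 1)) : Prop :=
  ∀ (a0 : A) (v : ℕ → A) (a : A), app (omk k A p a0 v) a = omk k A (p + 1) a0 (setAt v p a)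

def bar1 : T k A 1 ≃ₗ[k] Abar k A := PiTensorProduct.subsingletonEquiv (0 : Fin 1)

/-- `ḡ = (π ⊗ id^{⊗q}) ∘ g : (sĀ)^{⊗n} → (sĀ)^{⊗(q+1)}` for a cochain `g`. -/
def barify (n q : ℕ) (g : Cochain k A n q) : T k A n →ₗ[k] T k A (q + 1) :=
  (castT k A (Nat.add_comm 1 q)).toLinearMap
    ∘ₗ (splitT k A 1 q).symm.toLinearMap
    ∘ₗ (TensorProduct.congr (bar1 k A).symm (LinearEquiv.refl k (T k A q))).toLinearMap
    ∘ₗ LinearMap.rTensor (T k A q) (pr k A)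
    ∘ₗ g

/-- Apply `F` to the middle `b` factors of `(sĀ)^{⊗(a+b+c)}`. -/
def mapMid (a b c b' : ℕ) (F : T k A b →ₗ[k] T k A b') :
    T k A (a + b + c) →ₗ[k] T k A (a + b' + c) :=
  (splitT k A (a + b') c).symm.toLinearMap
    ∘ₗ LinearMap.rTensor (T k A c)
        ((splitT k A a b').symm.toLinearMap
          ∘ₗ LinearMap.lTensor (T k A a) F
          ∘ₗ (splitT k A a b).toLinearMap)
    ∘ₗ (splitT k A (a + b) c).toLinearMap

/-- The circle product `f ∘_{j+1} g` inserting `ḡ` into the `(j+1)`-st input of `f`. -/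
def circP (p q m n : ℕ) (f : Cochain k A m p) (g : Cochain k A n q) (j : ℕ) (hj : j < m) :
    Cochain k A (m + n - 1) (p + q) :=
  (appOut k A p q).toLinearMap
    ∘ₗ LinearMap.rTensor (T k A q) f
    ∘ₗ (splitT k A m q).toLinearMap
    ∘ₗ (castT k A (by omega : j + (q + 1) + (m - 1 - j) = m + q)).toLinearMap
    ∘ₗ mapMid k A j n (m - 1 - j) (q + 1) (barify k A n q g)
    ∘ₗ (castT k A (by omega : m + n - 1 = j + n + (m - 1 - j))).toLinearMap

/-- The circle product `f ∘_{-(j+1)} g` inserting `ḡ` into the `(j+1)`-st output slot of `f`. -/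
def circN (p q m n : ℕ) (f : Cochain k A m p) (g : Cochain k A n q) (j : ℕ) (hj : j < p)
    (hn : 0 < n) : Cochain k A (m + n - 1) (p + q) :=
  (castO k A (by omega : j + (q + 1) + (p - 1 - j) = p + q)).toLinearMap
    ∘ₗ LinearMap.lTensor A (mapMid k A j n (p - 1 - j) (q + 1) (barify k A n q g))
    ∘ₗ (castO k A (by omega : p + (n - 1) = j + n + (p - 1 - j))).toLinearMap
    ∘ₗ (appOut k A p (n - 1)).toLinearMap
    ∘ₗ LinearMap.rTensor (T k A (n - 1)) f
    ∘ₗ (splitT k A m (n - 1)).toLinearMap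
    ∘ₗ (castT k A (by omega : m + n - 1 = m + (n - 1))).toLinearMap

/-- The full circle product
`f ∘ g = Σ_{i=1}^m (-1)^{(n-q-1)(i-1)} f∘_i g - Σ_{i=1}^p (-1)^{(n-q-1)(i-m-p-1)} f∘_{-i} g`. -/
def circC (p q m n : ℕ) (f : Cochain k A m p) (g : Cochain k A n q) :
    Cochain k A (m + n - 1) (p + q) :=
  (∑ j ∈ (Finset.range m).attach,
      sg (((n : ℤ) - q - 1) * (j : ℕ)) •
        circP k A p q m n f g j (Finset.mem_range.mp j.2))
    - ∑ j ∈ (Finset.range p).attach,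
        if hn : 0 < n then
          sg (((n : ℤ) - q - 1) * (((j : ℕ) : ℤ) - m - p)) •
            circN k A p q m n f g j (Finset.mem_range.mp j.2) hn
        else 0

/-- The cup product
`f ∪ g = (μ ⊗ id^{⊗(p+q)})(id_A ⊗ f ⊗ id^{⊗q})(g ⊗ id^{⊗m})` on singular Hochschild cochains. -/
def cupM (p q m n : ℕ) (f : Cochain k A m p) (g : Cochain k A n q) :
    Cochain k A (n + m) (p + q) :=
  LinearMap.rTensor (T k A (p + q)) (LinearMap.mul' k A)
    ∘ₗ (TensorProduct.assoc k A A (T k A (p + q))).symm.toLinearMap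
    ∘ₗ LinearMap.lTensor A
        ((appOut k A p q).toLinearMap
          ∘ₗ LinearMap.rTensor (T k A q) f
          ∘ₗ (splitT k A m q).toLinearMap
          ∘ₗ (castT k A (Nat.add_comm q m)).toLinearMap
          ∘ₗ (splitT k A q m).symm.toLinearMap)
    ∘ₗ (TensorProduct.assoc k A (T k A q) (T k A m)).toLinearMap
    ∘ₗ LinearMap.rTensor (T k A m) g
    ∘ₗ (splitT k A n m).toLinearMap

/-- The submodule `A^∨ = Hom_{A⊗A^{op}}(A, A ⊗ A^{op}) ⊂ A ⊗ A` of Casimir-type elements: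
`Σ a x_i ⊗ y_i = Σ x_i ⊗ y_i a` for all `a`. -/
def Adual : Submodule k (A ⊗[k] A) :=
  ⨅ a : A,
    LinearMap.ker
      (LinearMap.rTensor A (LinearMap.mulLeft k a) - LinearMap.lTensor A (LinearMap.mulRight k a))

/-- Ambient model for Hochschild chains with coefficients in `A^∨`:
`C_p(A, A^∨) ⊂ (A ⊗ A) ⊗ (sĀ)^{⊗p}`. -/
abbrev Cdual (p : ℕ) : Type := (A ⊗[k] A) ⊗[k] T k A p

def dmk (p : ℕ) (x : A ⊗[k] A) (v : ℕ → A) : Cdual k A p := x ⊗ₜ tp k A p v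

/-- Value of the Hochschild boundary on a generator of `C_{p+1}(A, A^∨)`, using the bimodule
structure `a·(Σ x_i ⊗ y_i)·b = Σ x_i b ⊗ a y_i` of `A^∨`. -/
def bdualGen (p : ℕ) (x : A ⊗[k] A) (v : ℕ → A) : Cdual k A p :=
  dmk k A p (LinearMap.rTensor A (LinearMap.mulRight k (v 0)) x) (shiftT v)
    + ∑ j ∈ Finset.range p, sg ((j : ℤ) + 1) • dmk k A p x (mulAt v j)
    + sg ((p : ℤ) + 1) • dmk k A p (LinearMap.lTensor A (LinearMap.mulLeft k (v p)) x) v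

def IsBdual (p : ℕ) (f : Cdual k A (p + 1) →ₗ[k] Cdual k A p) : Prop :=
  ∀ (x : A ⊗[k] A) (v : ℕ → A), f (dmk k A (p + 1) x v) = bdualGen k A p x v

/-- The multiplication map `μ : C_0(A, A^∨) → A`, `Σ x_i ⊗ y_i ↦ Σ x_i y_i`. -/
def muD : Cdual k A 0 →ₗ[k] A :=
  LinearMap.mul' k A
    ∘ₗ (TensorProduct.rid k (A ⊗[k] A)).toLinearMap
    ∘ₗ LinearMap.lTensor (A ⊗[k] A) (PiTensorProduct.isEmptyEquiv (Fin 0)).toLinearMap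

/-- The embedding `ι : C_p(A, A^∨) → Ω_nc^{p+1}(A)`,
`(Σ x_j ⊗ y_j) ⊗ s\bar a_{1,p} ↦ Σ x_j ⊗ s\bar a_{1,p} ⊗ s\bar{y_j}`. -/
def iotaN (p : ℕ) : Cdual k A p →ₗ[k] Omega k A (p + 1) :=
  LinearMap.lTensor A
      ((splitT k A p 1).symm.toLinearMap
        ∘ₗ (TensorProduct.congr (LinearEquiv.refl k (T k A p)) (bar1 k A).symm).toLinearMap
        ∘ₗ LinearMap.lTensor (T k A p) (pr k A)
        ∘ₗ (TensorProduct.comm k A (T k A p)).toLinearMap)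
    ∘ₗ (TensorProduct.assoc k A A (T k A p)).toLinearMap

/-- Value of the Hochschild boundary on a generator of `C_{m+1}(A, A)`. -/
def bGen (m : ℕ) (a0 : A) (v : ℕ → A) : Omega k A m :=
  omk k A m (a0 * v 0) (shiftT v)
    + ∑ j ∈ Finset.range m, sg ((j : ℤ) + 1) • omk k A m a0 (mulAt v j)
    + sg ((m : ℤ) + 1) • omk k A m (v m * a0) v

def IsB (m : ℕ) (bmap : Omega k A (m + 1) →ₗ[k] Omega k A m) : Prop :=
  ∀ (a0 : A) (v : ℕ → A), bmap (omk k A (m + 1) a0 v) = bGen k A m a0 v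

/-- Value of the Connes `B` operator on a generator of `C_m(A, A)`:
`B(a₀ ⊗ s\bar a_{1,m}) = Σ_{i=1}^{m+1} (-1)^{mi} 1 ⊗ s\bar a_{i,m} ⊗ s\bar a₀ ⊗ s\bar a_{1,i-1}`. -/
def BGen (m : ℕ) (a0 : A) (v : ℕ → A) : Omega k A (m + 1) :=
  ∑ t ∈ Finset.range (m + 1),
    sg ((m : ℤ) * ((t : ℤ) + 1)) •
      omk k A (m + 1) 1
        (fun j => if j < m - t then v (t + j) else if j = m - t then a0 else v (j - (m - t) - 1))

def IsConnesB (m : ℕ) (Bm : Omega k A m →ₗ[k] Omega k A (m + 1)) : Prop :=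
  ∀ (a0 : A) (v : ℕ → A), Bm (omk k A m a0 v) = BGen k A m a0 v

/-- Hochschild cochains with coefficients in `A` itself. -/
abbrev CochA (n : ℕ) : Type := T k A n →ₗ[k] A

def IsDeltaA (N : ℕ) (F : CochA k A N) (D : CochA k A (N + 1)) : Prop :=
  ∀ v : ℕ → A,
    D (tp k A (N + 1) v) =
      sg ((N : ℤ) + 1) •
        (v 0 * F (tp k A N (shiftT v))
          + ∑ i ∈ Finset.range N, sg ((i : ℤ) + 1) • F (tp k A N (mulAt v i))
          + sg ((N : ℤ) + 1) • (F (tp k A N v) * v N))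

/-- The chain-chain star product on generators:
`α ⋆ β = Σ (x'_j x_i ⊗ y'_j) ⊗ s\bar a_{1,p} ⊗ s\bar{y_i} ⊗ s\bar b_{1,q}` for
`α = (Σ x_i ⊗ y_i) ⊗ s\bar a_{1,a}` and `β = (Σ x'_j ⊗ y'_j) ⊗ s\bar b_{1,b}`. -/
def IsSt (a b c : ℕ) (st : Cdual k A a →ₗ[k] Cdual k A b →ₗ[k] Cdual k A c) : Prop :=
  ∀ (x0 x1 : A) (v : ℕ → A) (y0 y1 : A) (w : ℕ → A),
    st (dmk k A a (x0 ⊗ₜ x1) v) (dmk k A b (y0 ⊗ₜ y1) w) =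
      dmk k A c ((y0 * x0) ⊗ₜ y1) (catAt a v x1 w)

/-- The homotopy `β • α` on generators (`β` of chain degree `a`, `α` of chain degree `b`). -/
def IsBul (a b c : ℕ) (bul : Cdual k A a →ₗ[k] Cdual k A b →ₗ[k] Cdual k A c) : Prop :=
  ∀ (y0 y1 : A) (w : ℕ → A) (x0 x1 : A) (v : ℕ → A),
    bul (dmk k A a (y0 ⊗ₜ y1) w) (dmk k A b (x0 ⊗ₜ x1) v) =
      ∑ t ∈ Finset.range (b + 1),
        sg ((a : ℤ) * ((t : ℤ) + 1)) •
          dmk k A c (x0 ⊗ₜ x1)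
            (fun j =>
              if j < t then v j
              else if j = t then y0
              else if j < t + 1 + a then w (j - t - 1)
              else if j = t + 1 + a then y1
              else v (j - a - 2))

/-- The `A^∨`-coefficient part of `C_p(A, A^∨)` inside the ambient `(A ⊗ A) ⊗ (sĀ)^{⊗p}`. -/
def AdualChains (p : ℕ) : Submodule k (Cdual k A p) :=
  LinearMap.range (LinearMap.rTensor (T k A p) (Adual k A).subtype)

/-- `conv (Σ x_i ⊗ y_i) = Σ ⟨y_i, 1⟩ x_i`, the inverse of `A ≅ A^∨` for a symmetric algebra
with bilinear form `br`. -/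
def conv (br : A →ₗ[k] A →ₗ[k] k) : A ⊗[k] A →ₗ[k] A :=
  (TensorProduct.rid k A).toLinearMap ∘ₗ
    LinearMap.lTensor A
      ((LinearMap.ringLmapEquivSelf k k k).symm 1 ∘ₗ (br.flip 1))

end

end TateHochschild

/-!
The stabilization map appends one bar on the right:
`θ f (a₁, …, a_{N+1}) = f (a₁, …, a_N) ⊗ s\bar a_{N+1}`. Appending a bar commutes with the left
multiplication and with the face maps that do not touch `a_{N+1}`. Since the formula for `◁`
ends with the face map multiplying the last two bars,
`(x ◁ a) ⊗ s\bar b = x ⊗ s\overline{ab} - (x ⊗ s\bar a) ◁ b`; this identity turns the `◁`-term of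
`θ (δ f)` into the last face term plus the `◁`-term of `δ (θ f)`.
-/

namespace TateHochschild

noncomputable section

variable {k A : Type}

theorem shiftT_setAt_succ (w : ℕ → A) (n : ℕ) (b : A) :
    shiftT (setAt w (n + 1) b) = setAt (shiftT w) n b := by
  funext j
  by_cases hj : j = n <;> simp [shiftT, setAt, hj]

variable [Ring A]

theorem mulAt_setAt_of_lt {i n : ℕ} (h : i < n) (w : ℕ → A) (b : A) :
    mulAt (setAt w (n + 1) b) i = setAt (mulAt w i) n b := by
  funext j
  simp only [mulAt, setAt]
  split_ifs <;> first | rfl | omega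

theorem mulAt_apply_of_gt {i j : ℕ} (h : i < j) (v : ℕ → A) : mulAt v i j = v (j + 1) := by
  simp [mulAt, h.not_gt, h.ne']

variable [Field k] [Algebra k A]

theorem tp_congr {n : ℕ} {v w : ℕ → A} (h : ∀ j < n, v j = w j) :
    tp k A n v = tp k A n w := by
  unfold tp
  congr 1
  funext i
  rw [h i i.2]

theorem ext_tp {n : ℕ} {M : Type} [AddCommGroup M] [Module k M] {F G : T k A n →ₗ[k] M}
    (h : ∀ v : ℕ → A, F (tp k A n v) = G (tp k A n v)) : F = G := by
  refine LinearMap.ext fun x => ?_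
  induction x using PiTensorProduct.induction_on' with
  | tprodCoeff r f =>
    choose g hg using fun i : Fin n => Submodule.Quotient.mk_surjective _ (f i)
    have hf : (⨂ₜ[k] i, f i) = tp k A n (fun j => if hj : j < n then g ⟨j, hj⟩ else 1) := by
      unfold tp
      congr 1
      funext i
      simp only [dif_pos i.2]
      rw [Fin.eta]
      exact (hg i).symm
    rw [PiTensorProduct.tprodCoeff_eq_smul_tprod, map_smul, map_smul, hf, h]
  | add x y hx hy => rw [map_add, map_add, hx, hy]

theorem ext_omk {n : ℕ} {M : Type} [AddCommGroup M] [Module k M] {F G : Omega k A n →ₗ[k] M}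
    (h : ∀ (a0 : A) (v : ℕ → A), F (omk k A n a0 v) = G (omk k A n a0 v)) : F = G :=
  TensorProduct.ext' fun a0 x => LinearMap.congr_fun
    (ext_tp (F := F ∘ₗ TensorProduct.mk k A (T k A n) a0)
      (G := G ∘ₗ TensorProduct.mk k A (T k A n) a0) (h a0)) x

theorem splitT_tp (a b : ℕ) (v : ℕ → A) :
    splitT k A a b (tp k A (a + b) v) = tp k A a v ⊗ₜ tp k A b (fun j => v (a + j)) := by
  unfold splitT tp
  simp only [LinearEquiv.trans_apply, PiTensorProduct.reindex_tprod,
    PiTensorProduct.tmulEquiv_symm_apply, Equiv.symm_symm]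
  congr 1

theorem splitT_symm_tp (a b : ℕ) (v w : ℕ → A) :
    (splitT k A a b).symm (tp k A a v ⊗ₜ tp k A b w) =
      tp k A (a + b) (fun j => if j < a then v j else w (j - a)) := by
  rw [LinearEquiv.symm_apply_eq, splitT_tp]
  congr 1
  · exact tp_congr fun j hj => by simp [hj]
  · exact tp_congr fun j _ => by simp

theorem appOut_tmul (p q : ℕ) (a0 : A) (v w : ℕ → A) :
    appOut k A p q (omk k A p a0 v ⊗ₜ tp k A q w) =
      omk k A (p + q) a0 (fun j => if j < p then v j else w (j - p)) := by
  simp only [appOut, omk, LinearEquiv.trans_apply, TensorProduct.assoc_tmul,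
    TensorProduct.congr_tmul, LinearEquiv.refl_apply, splitT_symm_tp]

variable (k A) in
def appendBar (p : ℕ) (a : A) : Omega k A p →ₗ[k] Omega k A (p + 1) :=
  (appOut k A p 1).toLinearMap ∘ₗ
    (TensorProduct.mk k (Omega k A p) (T k A 1)).flip (tp k A 1 fun _ => a)

theorem appendBar_omk (p : ℕ) (a a0 : A) (v : ℕ → A) :
    appendBar k A p a (omk k A p a0 v) = omk k A (p + 1) a0 (setAt v p a) := by
  rw [appendBar, LinearMap.comp_apply, LinearMap.flip_apply, TensorProduct.mk_apply,
    LinearEquiv.coe_coe, appOut_tmul]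
  refine congrArg (a0 ⊗ₜ[k] ·) (tp_congr fun j hj => ?_)
  rcases Nat.lt_succ_iff_lt_or_eq.mp hj with h | rfl
  · simp [h, setAt, h.ne]
  · simp [setAt]

theorem lmul_omk (p : ℕ) (a a0 : A) (v : ℕ → A) :
    lmul k A p a (omk k A p a0 v) = omk k A p (a * a0) v := by
  simp [lmul, omk]

theorem lmul_appendBar (p : ℕ) (a b : A) (x : Omega k A p) :
    lmul k A (p + 1) b (appendBar k A p a x) = appendBar k A p a (lmul k A p b x) := by
  have h : lmul k A (p + 1) b ∘ₗ appendBar k A p a = appendBar k A p a ∘ₗ lmul k A p b :=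
    ext_omk fun a0 v => by simp only [LinearMap.comp_apply, lmul_omk, appendBar_omk]
  exact LinearMap.congr_fun h x

theorem thetaM_tp (P n : ℕ) (f : Cochain k A n P) (v : ℕ → A) :
    thetaM k A P n f (tp k A (n + 1) v) = appendBar k A P (v n) (f (tp k A n v)) := by
  simp only [thetaM, appendBar, LinearMap.coe_comp, Function.comp_apply, LinearEquiv.coe_coe,
    splitT_tp, LinearMap.rTensor_tmul, LinearMap.flip_apply, TensorProduct.mk_apply]
  congr 2
  exact tp_congr fun j hj => by interval_cases j; rfl

theorem tp_mulAt_of_le {i n : ℕ} (h : n ≤ i) (v : ℕ → A) :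
    tp k A n (mulAt v i) = tp k A n v :=
  tp_congr fun _ hj => if_pos (hj.trans_le h)

theorem omk_mulAt_setAt_self (p : ℕ) (a0 : A) (v : ℕ → A) (a b : A) :
    omk k A (p + 1) a0 (mulAt (setAt (setAt v p a) (p + 1) b) p) =
      omk k A (p + 1) a0 (setAt v p (a * b)) :=
  congrArg (a0 ⊗ₜ[k] ·) <| tp_congr fun j hj => by
    rcases Nat.lt_succ_iff_lt_or_eq.mp hj with h | rfl
    · simp [mulAt, setAt, h, h.ne, (h.trans (Nat.lt_succ_self p)).ne]
    · simp [mulAt, setAt]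

theorem sg_add_one (z : ℤ) : sg (z + 1) = -sg z := by
  unfold sg
  by_cases h : Even z <;> simp [h]

theorem sg_eq_neg_of_eq_add_one {y z : ℤ} (h : y = z + 1) : sg y = -sg z :=
  h ▸ sg_add_one z

theorem sg_eq_of_eq_add_two {y z : ℤ} (h : y = z + 2) : sg y = sg z := by
  rw [h, show z + 2 = z + 1 + 1 by ring, sg_add_one, sg_add_one, neg_neg]

/-- Apart from the last face map, each summand of `rGen (p + 1)` is minus the corresponding
summand of `rGen p` with `s\bar b` appended. -/
theorem rGen_succ_setAt (p : ℕ) (a0 : A) (v : ℕ → A) (a b : A) :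
    rGen k A (p + 1) a0 (setAt v p a) b =
      omk k A (p + 1) a0 (setAt v p (a * b)) - appendBar k A p b (rGen k A p a0 v a) := by
  set w := setAt v p a
  have hfirst : sg ((p + 1 : ℕ) : ℤ) •
        omk k A (p + 1) (a0 * setAt w (p + 1) b 0) (shiftT (setAt w (p + 1) b)) =
      -appendBar k A p b (sg (p : ℤ) • omk k A p (a0 * w 0) (shiftT w)) := by
    have h0 : setAt w (p + 1) b 0 = w 0 := if_neg (Nat.succ_ne_zero p).symm
    rw [map_zsmul, appendBar_omk, h0, shiftT_setAt_succ,
      sg_eq_neg_of_eq_add_one (z := p) (by push_cast; ring), neg_smul]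
  have hinner : ∀ i ∈ Finset.range p,
      sg (((p + 1 : ℕ) : ℤ) + i + 1) • omk k A (p + 1) a0 (mulAt (setAt w (p + 1) b) i) =
        -appendBar k A p b (sg ((p : ℤ) + i + 1) • omk k A p a0 (mulAt w i)) := by
    intro i hi
    rw [map_zsmul, appendBar_omk, ← mulAt_setAt_of_lt (Finset.mem_range.mp hi),
      sg_eq_neg_of_eq_add_one (z := (p : ℤ) + i + 1) (by push_cast; ring), neg_smul]
  have hlast : sg (((p + 1 : ℕ) : ℤ) + p + 1) = 1 := if_pos ⟨(p : ℤ) + 1, by push_cast; ring⟩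
  rw [rGen, rGen, Finset.sum_range_succ, Finset.sum_congr rfl hinner, hlast, one_smul,
    omk_mulAt_setAt_self, hfirst, map_add, map_sum, Finset.sum_neg_distrib]
  abel

theorem appendBar_rAct {p : ℕ} {actp : Omega k A p →ₗ[k] A →ₗ[k] Omega k A p}
    (hactp : IsRAct k A p actp) {actp1 : Omega k A (p + 1) →ₗ[k] A →ₗ[k] Omega k A (p + 1)}
    (hactp1 : IsRAct k A (p + 1) actp1) (a b : A) (x : Omega k A p) :
    appendBar k A p b (actp x a) =
      appendBar k A p (a * b) x - actp1 (appendBar k A p a x) b := by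
  have h : appendBar k A p b ∘ₗ actp.flip a =
      appendBar k A p (a * b) - actp1.flip b ∘ₗ appendBar k A p a :=
    ext_omk fun a0 v => by
      simp only [LinearMap.comp_apply, LinearMap.flip_apply, LinearMap.sub_apply, appendBar_omk]
      rw [hactp, hactp1, rGen_succ_setAt, sub_sub_cancel]
  exact LinearMap.congr_fun h x

theorem thetaM_tp_mulAt_of_lt {P n i : ℕ} (h : i < n) (f : Cochain k A n P) (v : ℕ → A) :
    thetaM k A P n f (tp k A (n + 1) (mulAt v i)) =
      appendBar k A P (v (n + 1)) (f (tp k A n (mulAt v i))) := by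
  rw [thetaM_tp, mulAt_apply_of_gt h]

theorem thetaM_tp_mulAt_self (P n : ℕ) (f : Cochain k A n P) (v : ℕ → A) :
    thetaM k A P n f (tp k A (n + 1) (mulAt v n)) =
      appendBar k A P (v n * v (n + 1)) (f (tp k A n v)) := by
  rw [thetaM_tp, tp_mulAt_of_le le_rfl]
  simp [mulAt]

end

/-- Lemma 3.1 of the paper.  The stabilization maps
`θ_p : C^*(A, Ω_nc^p(A)) → C^*(A, Ω_nc^{p+1}(A))`, `f ↦ f ⊗ id_{sĀ}`, commute with the
Hochschild differential: `θ_p ∘ δ = δ ∘ θ_p`. -/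
theorem theta_commutes_with_delta
    (k A : Type) [Field k] [Ring A] [Algebra k A] (p N : ℕ)
    (actp : Omega k A p →ₗ[k] A →ₗ[k] Omega k A p) (hactp : IsRAct k A p actp)
    (actp1 : Omega k A (p + 1) →ₗ[k] A →ₗ[k] Omega k A (p + 1))
    (hactp1 : IsRAct k A (p + 1) actp1)
    (f : Cochain k A N p)
    (D : Cochain k A (N + 1) p) (hD : IsDelta k A p N actp f D)
    (Dθ : Cochain k A (N + 2) (p + 1))
    (hDθ : IsDelta k A (p + 1) (N + 1) actp1 (thetaM k A p N f) Dθ) :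
    thetaM k A p (N + 1) D = Dθ := by
  refine ext_tp fun v => ?_
  have hinner : ∀ i ∈ Finset.range N,
      sg ((i : ℤ) + 1) • thetaM k A p N f (tp k A (N + 1) (mulAt v i)) =
        appendBar k A p (v (N + 1)) (sg ((i : ℤ) + 1) • f (tp k A N (mulAt v i))) := by
    intro i hi
    rw [thetaM_tp_mulAt_of_lt (Finset.mem_range.mp hi), map_zsmul]
  have hshift : shiftT v N = v (N + 1) := rfl
  rw [thetaM_tp, hD v, hDθ v, thetaM_tp, thetaM_tp, hshift, Finset.sum_range_succ,
    Finset.sum_congr rfl hinner, thetaM_tp_mulAt_self, ← map_sum,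
    sg_eq_of_eq_add_two (y := ((N + 1 : ℕ) : ℤ) + ((p + 1 : ℕ) : ℤ) + 1) (z := (N : ℤ) + p + 1)
      (by push_cast; ring),
    sg_eq_neg_of_eq_add_one (y := ((N + 1 : ℕ) : ℤ) + 1) (z := (N : ℤ) + 1) (by push_cast; ring)]
  simp only [map_zsmul, map_add, lmul_appendBar, appendBar_rAct hactp hactp1, smul_sub, neg_smul]
  congr 1
  abel

end TateHochschild
end

section
/- For a finite-dimensional symmetric k-algebra A with nondegenerate pairing ⟨·,·⟩, the pairing on the generalized Tate-Hochschild complex D^*(A,A) is compatible with the differential: ⟨∂(x), y⟩ = (-1)^{|x|-1} ⟨x, ∂(y)⟩ for all homogeneous x, y ∈ D^*(A,A). -/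
open TensorProduct PiTensorProduct

namespace TateHochschild

/-- The graded pairing `⟨f, a₀ ⊗ s\bar a_{1,m}⟩ = ⟨f(s\bar a_{1,m}), a₀⟩` between `C^m(A,A)`
and `C_m(A,A)`, characterized on generators. -/
def IsPair (k A : Type) [Field k] [Ring A] [Algebra k A] (m : ℕ)
    (br : A →ₗ[k] A →ₗ[k] k) (F : CochA k A m) (P : Omega k A m →ₗ[k] k) : Prop :=
  ∀ (a0 : A) (v : ℕ → A), P (omk k A m a0 v) = br (F (tp k A m v)) a0

/-! (a) is checked on generators `a₀ ⊗ s\bar a_{1,m+1}`: the pairing turns the outer terms of `δ`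
into those of `b` via `⟨a₁ x, a₀⟩ = ⟨x, a₀ a₁⟩` and `⟨x a_{m+1}, a₀⟩ = ⟨x, a_{m+1} a₀⟩`, while the
inner terms match verbatim. (b): by cyclicity `⟨Σ e_λ a e^λ, c⟩ = ⟨a, Σ e^λ c e_λ⟩`, and
`Σ e^λ ⊗ e_λ = Σ e_λ ⊗ e^λ` because expanding `e^λ` in the basis `e_μ` has the symmetric Gram
matrix `⟨e^λ, e^μ⟩` as coefficients. -/

section SymmetricForm

variable {k A : Type} [CommRing k] [Ring A] [Algebra k A] (br : A →ₗ[k] A →ₗ[k] k)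

theorem br_mul_cycle (hassoc : ∀ a b c : A, br (a * b) c = br a (b * c))
    (hsymm : ∀ a b : A, br a b = br b a) (x y z : A) : br (x * y) z = br y (z * x) := by
  rw [hassoc, hsymm, hassoc]

variable {ι : Type} [Fintype ι] [DecidableEq ι] (e : Module.Basis ι k A) (E : ι → A)

theorem sum_br_dual_smul_basis (hdual : ∀ i j : ι, br (e i) (E j) = if i = j then 1 else 0)
    (x : A) : ∑ j, br x (E j) • e j = x := by
  have hrepr : ∀ j, br x (E j) = e.repr x j := fun j => by
    calc br x (E j) = br (∑ i, e.repr x i • e i) (E j) := by rw [e.sum_repr]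
      _ = e.repr x j := by
        simp only [map_sum, map_smul, LinearMap.sum_apply, LinearMap.smul_apply, hdual,
          smul_eq_mul, mul_ite, mul_one, mul_zero, Finset.sum_ite_eq', Finset.mem_univ, if_true]
  simp only [hrepr, e.sum_repr]

theorem sum_dual_mul_mul_basis_eq (hsymm : ∀ a b : A, br a b = br b a)
    (hdual : ∀ i j : ι, br (e i) (E j) = if i = j then 1 else 0) (x : A) :
    ∑ i, E i * x * e i = ∑ i, e i * x * E i := by
  have hE := sum_br_dual_smul_basis br e E hdual
  calc ∑ i, E i * x * e i
      = ∑ i, ∑ j, br (E i) (E j) • (e j * x * e i) := by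
        refine Finset.sum_congr rfl fun i _ => ?_
        conv_lhs => rw [← hE (E i)]
        simp only [Finset.sum_mul, smul_mul_assoc]
    _ = ∑ j, ∑ i, br (E j) (E i) • (e j * x * e i) := by
        rw [Finset.sum_comm]
        simp only [hsymm (E _) (E _)]
    _ = ∑ j, e j * x * E j := by
        refine Finset.sum_congr rfl fun j _ => ?_
        conv_rhs => rw [← hE (E j)]
        simp only [Finset.mul_sum, mul_smul_comm]

theorem br_sum_basis_mul_mul_dual_comm (hassoc : ∀ a b c : A, br (a * b) c = br a (b * c))
    (hsymm : ∀ a b : A, br a b = br b a)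
    (hdual : ∀ i j : ι, br (e i) (E j) = if i = j then 1 else 0) (a c : A) :
    br (∑ i, e i * a * E i) c = br a (∑ i, e i * c * E i) := by
  rw [← sum_dual_mul_mul_basis_eq br e E hsymm hdual, map_sum, LinearMap.sum_apply, map_sum]
  refine Finset.sum_congr rfl fun i _ => ?_
  rw [hassoc, br_mul_cycle br hassoc hsymm, mul_assoc]

end SymmetricForm

section HochschildPairing

variable {k A : Type} [Field k] [Ring A] [Algebra k A]

theorem exists_tp_eq_tprod (n : ℕ) (x : Fin n → Abar k A) :
    ∃ v : ℕ → A, tp k A n v = tprod k x := by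
  choose g hg using fun i => Submodule.mkQ_surjective (Submodule.span k ({(1 : A)} : Set A)) (x i)
  refine ⟨fun j => if h : j < n then g ⟨j, h⟩ else 0, ?_⟩
  unfold tp
  congr 1
  funext i
  simpa only [i.isLt, dif_pos, Fin.eta, pr] using hg i

theorem Omega.linearMap_ext {M : Type} [AddCommGroup M] [Module k M] {n : ℕ}
    {P Q : Omega k A n →ₗ[k] M}
    (h : ∀ (a0 : A) (v : ℕ → A), P (omk k A n a0 v) = Q (omk k A n a0 v)) : P = Q := by
  refine TensorProduct.ext' fun a t => ?_
  induction t using PiTensorProduct.induction_on with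
  | smul_tprod r x =>
      obtain ⟨v, hv⟩ := exists_tp_eq_tprod n x
      rw [← hv, TensorProduct.tmul_smul, map_smul, map_smul]
      exact congrArg _ (h a v)
  | add x y hx hy => rw [TensorProduct.tmul_add, map_add, map_add, hx, hy]

variable (br : A →ₗ[k] A →ₗ[k] k)

theorem IsPair.apply_bGen {m : ℕ} {F : CochA k A m} {P : Omega k A m →ₗ[k] k}
    (hP : IsPair k A m br F P) (a0 : A) (v : ℕ → A) :
    P (bGen k A m a0 v) =
      br (F (tp k A m (shiftT v))) (a0 * v 0)
        + ∑ j ∈ Finset.range m, sg ((j : ℤ) + 1) • br (F (tp k A m (mulAt v j))) a0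
        + sg ((m : ℤ) + 1) • br (F (tp k A m v)) (v m * a0) := by
  unfold IsPair at hP
  simp only [bGen, map_add, map_sum, map_zsmul, hP]

theorem IsPair.eq_smul_comp_of_isDeltaA (hassoc : ∀ a b c : A, br (a * b) c = br a (b * c))
    (hsymm : ∀ a b : A, br a b = br b a) {m : ℕ} {F : CochA k A m} {D : CochA k A (m + 1)}
    (hD : IsDeltaA k A m F D) {bm : Omega k A (m + 1) →ₗ[k] Omega k A m} (hB : IsB k A m bm)
    {P1 : Omega k A (m + 1) →ₗ[k] k} (hP1 : IsPair k A (m + 1) br D P1)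
    {P2 : Omega k A m →ₗ[k] k} (hP2 : IsPair k A m br F P2) :
    P1 = sg ((m : ℤ) + 1) • (P2 ∘ₗ bm) := by
  refine Omega.linearMap_ext fun a0 v => ?_
  rw [hP1, hD, LinearMap.smul_apply, LinearMap.comp_apply, hB, hP2.apply_bGen,
    ← br_mul_cycle br hassoc hsymm (v 0), ← hassoc]
  simp only [map_add, map_sum, map_zsmul, LinearMap.add_apply, LinearMap.sum_apply,
    LinearMap.smul_apply]

end HochschildPairing

theorem tate_complex_pairing_compatible_with_differential_general
    (k A : Type) [Field k] [Ring A] [Algebra k A]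
    (br : A →ₗ[k] A →ₗ[k] k)
    (hassoc : ∀ a b c : A, br (a * b) c = br a (b * c))
    (hsymm : ∀ a b : A, br a b = br b a)
    (ι : Type) [Fintype ι] [DecidableEq ι] (e : Module.Basis ι k A) (E : ι → A)
    (hdual : ∀ i j : ι, br (e i) (E j) = if i = j then 1 else 0) :
    -- (a) cochain–chain compatibility
    (∀ (m : ℕ) (F : CochA k A m) (D : CochA k A (m + 1)), IsDeltaA k A m F D →
      ∀ bm : Omega k A (m + 1) →ₗ[k] Omega k A m, IsB k A m bm →
      ∀ P1 : Omega k A (m + 1) →ₗ[k] k, IsPair k A (m + 1) br D P1 →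
      ∀ P2 : Omega k A m →ₗ[k] k, IsPair k A m br F P2 →
      ∀ c : Omega k A (m + 1), P1 c = sg ((m : ℤ) + 1) • P2 (bm c)) ∧
    -- (b) compatibility across the middle differential `τ(x) = Σ_λ e_λ x e^λ`
    (∀ a c : A, br (∑ i : ι, e i * a * E i) c = br a (∑ i : ι, e i * c * E i)) := by
  refine ⟨fun m F D hD bm hB P1 hP1 P2 hP2 c => ?_,
    br_sum_basis_mul_mul_dual_comm br e E hassoc hsymm hdual⟩
  exact LinearMap.congr_fun (IsPair.eq_smul_comp_of_isDeltaA br hassoc hsymm hD hB hP1 hP2) c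

/-- Lemma 6.11(i) of the paper.  For a finite-dimensional symmetric
`k`-algebra `A`, the pairing on the generalized Tate–Hochschild complex `𝒟^*(A,A)` is
compatible with the differential: `⟨∂x, y⟩ = (-1)^{|x|-1} ⟨x, ∂y⟩` for homogeneous `x, y`.
The nontrivial cases are: (a) `x` a cochain of degree `m` and `y ∈ C_{m+1}(A,A)`, where
`∂x = δx` and `∂y = b(y)`; and (b) the middle degrees, where `∂` is
`τ(x) = Σ_λ e_λ x e^λ` and the identity reads `⟨τ(a), c⟩ = ⟨a, τ(c)⟩`. -/
theorem tate_complex_pairing_compatible_with_differential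
    (k A : Type) [Field k] [Ring A] [Algebra k A] [FiniteDimensional k A]
    (br : A →ₗ[k] A →ₗ[k] k)
    (hassoc : ∀ a b c : A, br (a * b) c = br a (b * c))
    (hsymm : ∀ a b : A, br a b = br b a)
    (hnondeg : ∀ a : A, (∀ b : A, br a b = 0) → a = 0)
    (ι : Type) [Fintype ι] [DecidableEq ι] (e : Module.Basis ι k A) (E : ι → A)
    (hdual : ∀ i j : ι, br (e i) (E j) = if i = j then 1 else 0) :
    -- (a) cochain–chain compatibility
    (∀ (m : ℕ) (F : CochA k A m) (D : CochA k A (m + 1)), IsDeltaA k A m F D →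
      ∀ bm : Omega k A (m + 1) →ₗ[k] Omega k A m, IsB k A m bm →
      ∀ P1 : Omega k A (m + 1) →ₗ[k] k, IsPair k A (m + 1) br D P1 →
      ∀ P2 : Omega k A m →ₗ[k] k, IsPair k A m br F P2 →
      ∀ c : Omega k A (m + 1), P1 c = sg ((m : ℤ) + 1) • P2 (bm c)) ∧
    -- (b) compatibility across the middle differential `τ(x) = Σ_λ e_λ x e^λ`
    (∀ a c : A, br (∑ i : ι, e i * a * E i) c = br a (∑ i : ι, e i * c * E i)) :=
  tate_complex_pairing_compatible_with_differential_general k A br hassoc hsymm ι e E hdual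

end TateHochschild
end
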